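/- arXiv:1803.02672 — 4 statements merged into one kernel-verified Lean document; each statement's English description precedes it below -/
import Mathlib

section
/- Let p ∈ (1,∞). Define for z ∈ ℝ the quantities d₁(z) := (z−1)(z^{p−1}−1), d₂(z) := |z|^p − 1 − p(z−1), and d₃(z) := (z^{p/2} − 1)², where z^a denotes the signed power |z|^{a−1}z (with 0^a := 0). Then d₁, d₂, d₃ are nonnegative on ℝ and there exist constants 0 < c ≤ C, depending only on p, such that for all z ∈ ℝ: c·d₂(z) ≤ d₁(z) ≤ C·d₂(z) and c·d₃(z) ≤ d₁(z) ≤ C·d₃(z). -/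
/-!
For `z ≥ 0` put `u = z ^ (p / 2)`. Then `d₃ = (u - 1)²` and `d₁ = (u ^ a - 1) * (u ^ b - 1)` with
`a = 2 / p`, `b = 2 - 2 / p`, `a + b = 2`. Convexity of `t ↦ u ^ t` (weighted AM-GM) gives
`2 u ≤ u ^ a + u ^ b ≤ (1 - a) (u² + 1) + 2 a u` when `a ≤ 1`, which is `a d₃ ≤ d₁ ≤ d₃`; the same
convexity at the exponents `p`, `p - 1`, `0` gives `d₂ ≤ p d₁` and `(p - 1) d₁ ≤ p d₂`.

For `z < 0` there is no cancellation: each `dᵢ` is a sum of nonnegative powers of `|z|`, comparable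
to `1 + |z| ^ p`.
-/

/-- Signed power: `z ^ a := |z| ^ (a-1) * z`, with `0 ^ a = 0`. -/
noncomputable def sgnPow (a z : ℝ) : ℝ := |z| ^ (a - 1) * z

open Real Set Filter Asymptotics

theorem rpow_sum_mul_le_sum_mul_rpow {ι : Type*} (s : Finset ι) {w a : ι → ℝ}
    (hw : ∀ i ∈ s, 0 ≤ w i) (hw₁ : ∑ i ∈ s, w i = 1) (ha : ∑ i ∈ s, w i * a i ≠ 0)
    {u : ℝ} (hu : 0 ≤ u) :
    u ^ (∑ i ∈ s, w i * a i) ≤ ∑ i ∈ s, w i * u ^ a i := by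
  rcases hu.eq_or_lt with rfl | hu
  · rw [zero_rpow ha]
    exact Finset.sum_nonneg fun i hi => mul_nonneg (hw i hi) (rpow_nonneg le_rfl _)
  · simpa only [smul_eq_mul] using
      (convexOn_rpow_left hu).map_sum_le hw hw₁ fun i _ => mem_univ (a i)

theorem rpow_mul_add_mul_le {u θ₁ θ₂ a b : ℝ} (hu : 0 ≤ u) (h₁ : 0 ≤ θ₁) (h₂ : 0 ≤ θ₂)
    (h : θ₁ + θ₂ = 1) (hab : θ₁ * a + θ₂ * b ≠ 0) :
    u ^ (θ₁ * a + θ₂ * b) ≤ θ₁ * u ^ a + θ₂ * u ^ b := by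
  simpa [Fin.sum_univ_two] using rpow_sum_mul_le_sum_mul_rpow Finset.univ
    (w := ![θ₁, θ₂]) (a := ![a, b]) (by simp [Fin.forall_fin_two, h₁, h₂])
    (by simpa [Fin.sum_univ_two] using h) (by simpa [Fin.sum_univ_two] using hab) hu

theorem rpow_sub_one_mul_self {z p : ℝ} (hz : 0 ≤ z) (hp : p ≠ 0) : z ^ (p - 1) * z = z ^ p := by
  rw [← rpow_add_one' hz (by simpa using hp), sub_add_cancel]

theorem rpow_le_one_add_rpow {w t q : ℝ} (hw : 0 ≤ w) (ht : 0 ≤ t) (htq : t ≤ q) :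
    w ^ t ≤ 1 + w ^ q := by
  rcases le_total w 1 with h | h
  · linarith [rpow_le_one hw h ht, rpow_nonneg hw q]
  · linarith [rpow_le_rpow_of_exponent_le h htq]

theorem min_mul_sq_le_rpow_sub_one_mul_rpow_sub_one {a b u : ℝ} (ha : 0 < a) (hb : 0 < b)
    (hab : a + b = 2) (hu : 0 ≤ u) : min a b * (u - 1) ^ 2 ≤ (u ^ a - 1) * (u ^ b - 1) := by
  wlog h : a ≤ b generalizing a b
  · rw [min_comm, mul_comm (u ^ a - 1)]
    exact this hb ha (by linarith) (by linarith)
  rw [min_eq_left h]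
  have hb' : u ^ b ≤ (1 - a) * u ^ 2 + a * u := by
    have := rpow_mul_add_mul_le (θ₁ := 1 - a) (θ₂ := a) (a := 2) (b := 1) hu (by linarith) ha.le
      (by ring) (by linarith)
    rwa [show (1 - a) * 2 + a * 1 = b by linarith, rpow_two, rpow_one] at this
  have ha' : u ^ a ≤ (1 - a) + a * u := by
    have := rpow_mul_add_mul_le (θ₁ := 1 - a) (θ₂ := a) (a := 0) (b := 1) hu (by linarith) ha.le
      (by ring) (by linarith)
    rwa [show (1 - a) * 0 + a * 1 = a by ring, rpow_zero, mul_one, rpow_one] at this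
  have hprod : u ^ a * u ^ b = u ^ 2 := by
    rw [← rpow_add' hu (by linarith), hab, rpow_two]
  nlinarith

theorem rpow_sub_one_mul_rpow_sub_one_le_sq {a b u : ℝ} (hab : a + b = 2) (hu : 0 ≤ u) :
    (u ^ a - 1) * (u ^ b - 1) ≤ (u - 1) ^ 2 := by
  have hmean := rpow_mul_add_mul_le (u := u) (θ₁ := 1 / 2) (θ₂ := 1 / 2) (a := a) (b := b)
    hu (by norm_num) (by norm_num) (by norm_num) (by linarith)
  have hprod : u ^ a * u ^ b = u ^ 2 := by
    rw [← rpow_add' hu (by linarith), hab, rpow_two]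
  rw [show 1 / 2 * a + 1 / 2 * b = 1 by linarith, rpow_one] at hmean
  nlinarith

theorem mul_rpow_sub_one_le {p z : ℝ} (hp : 1 < p) (hz : 0 ≤ z) :
    p * z ^ (p - 1) ≤ (p - 1) * z ^ p + 1 := by
  have hp0 : 0 < p := by linarith
  have hexp : (p - 1) / p * p + 1 / p * 0 = p - 1 := by field_simp; ring
  have h := rpow_mul_add_mul_le (u := z) (θ₁ := (p - 1) / p) (θ₂ := 1 / p) (a := p) (b := 0)
    hz (by bound) (by positivity) (by field_simp; ring) (by rw [hexp]; linarith)
  rw [hexp, rpow_zero] at h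
  calc p * z ^ (p - 1) ≤ p * ((p - 1) / p * z ^ p + 1 / p * 1) := by gcongr
    _ = (p - 1) * z ^ p + 1 := by field_simp

theorem mul_le_rpow_add_mul_rpow_sub_one_add {p z : ℝ} (hp : 1 < p) (hz : 0 ≤ z) :
    (p ^ 2 - p + 1) * z ≤ z ^ p + (p - 1) * z ^ (p - 1) + (p - 1) ^ 2 := by
  set m := p ^ 2 - p + 1
  have hm : 0 < m := by nlinarith
  have hexp : 1 / m * p + (p - 1) / m * (p - 1) + (p - 1) ^ 2 / m * 0 = 1 := by
    field_simp; ring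
  have h := rpow_sum_mul_le_sum_mul_rpow Finset.univ (u := z)
    (w := ![1 / m, (p - 1) / m, (p - 1) ^ 2 / m]) (a := ![p, p - 1, 0])
    (fun i _ => by fin_cases i <;> dsimp <;> bound)
    (by simp only [Fin.sum_univ_three, Matrix.cons_val]; field_simp; ring)
    (by simp only [Fin.sum_univ_three, Matrix.cons_val, hexp]; norm_num) hz
  simp only [Fin.sum_univ_three, Matrix.cons_val, hexp, rpow_one, rpow_zero] at h
  calc m * z ≤ m * (1 / m * z ^ p + (p - 1) / m * z ^ (p - 1) + (p - 1) ^ 2 / m * 1) := by gcongr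
    _ = z ^ p + (p - 1) * z ^ (p - 1) + (p - 1) ^ 2 := by field_simp

theorem sgnPow_of_nonneg {a z : ℝ} (ha : a ≠ 0) (hz : 0 ≤ z) : sgnPow a z = z ^ a := by
  rcases hz.eq_or_lt with rfl | hz
  · simp [sgnPow, zero_rpow ha]
  · rw [sgnPow, abs_of_pos hz, rpow_sub_one_mul_self hz.le ha]

theorem sgnPow_of_neg {a z : ℝ} (hz : z < 0) : sgnPow a z = -|z| ^ a := by
  rw [sgnPow]
  calc |z| ^ (a - 1) * z = -(|z| ^ (a - 1) * |z|) := by rw [abs_of_neg hz]; ring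
    _ = -|z| ^ a := by rw [← rpow_add_one (abs_pos.2 hz.ne).ne', sub_add_cancel]

theorem isBigO_principal_of_mul_le_mul {α : Type*} {f g : α → ℝ} {s : Set α} {c C : ℝ}
    (hc : 0 < c) (hf : ∀ x ∈ s, 0 ≤ f x) (h : ∀ x ∈ s, c * f x ≤ C * g x) : f =O[𝓟 s] g :=
  isBigO_principal.2 ⟨|C| / c, fun x hx => by
    rw [norm_of_nonneg (hf x hx), div_mul_eq_mul_div, le_div_iff₀ hc, mul_comm, norm_eq_abs,
      ← abs_mul]
    exact (h x hx).trans (le_abs_self _)⟩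

theorem exists_bounds_of_isTheta_top {α : Type*} {f g : α → ℝ} (hf : ∀ x, 0 ≤ f x)
    (hg : ∀ x, 0 ≤ g x) (h : f =Θ[⊤] g) :
    ∃ c C : ℝ, 0 < c ∧ ∀ x, c * g x ≤ f x ∧ f x ≤ C * g x := by
  obtain ⟨C, hC⟩ := isBigO_top.1 h.1
  obtain ⟨c, hc, hcw⟩ := h.2.exists_pos
  refine ⟨c⁻¹, C, inv_pos.2 hc, fun x => ⟨?_, ?_⟩⟩
  · rw [inv_mul_le_iff₀ hc]
    simpa [norm_of_nonneg (hf x), norm_of_nonneg (hg x)] using isBigOWith_top.1 hcw x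
  · simpa [norm_of_nonneg (hf x), norm_of_nonneg (hg x)] using hC x

theorem isTheta_top_of_Iio_of_Ici {α : Type*} [LinearOrder α] {a : α} {f g : α → ℝ}
    (h₁ : f =Θ[𝓟 (Iio a)] g) (h₂ : f =Θ[𝓟 (Ici a)] g) : f =Θ[⊤] g := by
  rw [← principal_univ, ← Iio_union_Ici (a := a), ← sup_principal]
  exact h₁.sup h₂

namespace SignedPowerDissipation

noncomputable def d₁ (p z : ℝ) : ℝ := (z - 1) * (sgnPow (p - 1) z - 1)

noncomputable def d₂ (p z : ℝ) : ℝ := |z| ^ p - 1 - p * (z - 1)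

noncomputable def d₃ (p z : ℝ) : ℝ := (sgnPow (p / 2) z - 1) ^ 2

variable {p z : ℝ}

theorem d₁_eq_of_nonneg (hp : 1 < p) (hz : 0 ≤ z) : d₁ p z = (z - 1) * (z ^ (p - 1) - 1) := by
  rw [d₁, sgnPow_of_nonneg (by linarith) hz]

theorem d₂_eq_of_nonneg (hz : 0 ≤ z) : d₂ p z = z ^ p - 1 - p * (z - 1) := by
  rw [d₂, abs_of_nonneg hz]

theorem d₂_le_mul_d₁_of_nonneg (hp : 1 < p) (hz : 0 ≤ z) : d₂ p z ≤ p * d₁ p z := by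
  have h := rpow_sub_one_mul_self hz (by linarith : p ≠ 0)
  rw [d₁_eq_of_nonneg hp hz, d₂_eq_of_nonneg hz]
  nlinarith [mul_rpow_sub_one_le hp hz]

theorem sub_one_mul_d₁_le_mul_d₂_of_nonneg (hp : 1 < p) (hz : 0 ≤ z) :
    (p - 1) * d₁ p z ≤ p * d₂ p z := by
  have h := rpow_sub_one_mul_self hz (by linarith : p ≠ 0)
  rw [d₁_eq_of_nonneg hp hz, d₂_eq_of_nonneg hz]
  nlinarith [mul_le_rpow_add_mul_rpow_sub_one_add hp hz]

theorem d₁_eq_rpow_half_of_nonneg (hp : 1 < p) (hz : 0 ≤ z) :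
    d₁ p z = ((z ^ (p / 2)) ^ (2 / p) - 1) * ((z ^ (p / 2)) ^ (2 - 2 / p) - 1) := by
  have hp0 : p ≠ 0 := by positivity
  rw [d₁_eq_of_nonneg hp hz, ← rpow_mul hz, ← rpow_mul hz, show p / 2 * (2 / p) = 1 by field_simp,
    rpow_one, show p / 2 * (2 - 2 / p) = p - 1 by field_simp]

theorem d₃_eq_of_nonneg (hp : 1 < p) (hz : 0 ≤ z) : d₃ p z = (z ^ (p / 2) - 1) ^ 2 := by
  rw [d₃, sgnPow_of_nonneg (by positivity) hz]

theorem two_div_lt_two (hp : 1 < p) : 2 / p < 2 := by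
  rw [div_lt_iff₀ (by linarith)]
  linarith

theorem min_two_div_pos (hp : 1 < p) : 0 < min (2 / p) (2 - 2 / p) :=
  lt_min (by positivity) (by linarith [two_div_lt_two hp])

theorem min_mul_d₃_le_d₁_of_nonneg (hp : 1 < p) (hz : 0 ≤ z) :
    min (2 / p) (2 - 2 / p) * d₃ p z ≤ d₁ p z := by
  have h2p := two_div_lt_two hp
  rw [d₁_eq_rpow_half_of_nonneg hp hz, d₃_eq_of_nonneg hp hz]
  exact min_mul_sq_le_rpow_sub_one_mul_rpow_sub_one (by positivity) (by linarith) (by ring)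
    (rpow_nonneg hz _)

theorem d₁_le_d₃_of_nonneg (hp : 1 < p) (hz : 0 ≤ z) : d₁ p z ≤ d₃ p z := by
  rw [d₁_eq_rpow_half_of_nonneg hp hz, d₃_eq_of_nonneg hp hz]
  exact rpow_sub_one_mul_rpow_sub_one_le_sq (by ring) (rpow_nonneg hz _)

theorem d₁_eq_of_neg (hz : z < 0) : d₁ p z = (|z| + 1) * (|z| ^ (p - 1) + 1) := by
  rw [d₁, sgnPow_of_neg hz, abs_of_neg hz]
  ring

theorem d₂_eq_of_neg (hz : z < 0) : d₂ p z = |z| ^ p + p * |z| + (p - 1) := by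
  rw [d₂, abs_of_neg hz]
  ring

theorem d₃_eq_of_neg (hz : z < 0) : d₃ p z = (|z| ^ (p / 2) + 1) ^ 2 := by
  rw [d₃, sgnPow_of_neg hz]
  ring

theorem d₃_nonneg (p z : ℝ) : 0 ≤ d₃ p z := sq_nonneg _

theorem d₁_nonneg (hp : 1 < p) (z : ℝ) : 0 ≤ d₁ p z := by
  rcases lt_or_ge z 0 with hz | hz
  · rw [d₁_eq_of_neg hz]
    positivity
  · exact (mul_nonneg (min_two_div_pos hp).le (d₃_nonneg p z)).trans
      (min_mul_d₃_le_d₁_of_nonneg hp hz)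

theorem d₂_nonneg (hp : 1 < p) (z : ℝ) : 0 ≤ d₂ p z := by
  rcases lt_or_ge z 0 with hz | hz
  · rw [d₂_eq_of_neg hz]
    linarith [rpow_nonneg (abs_nonneg z) p, mul_nonneg (by linarith : 0 ≤ p) (abs_nonneg z)]
  · nlinarith [sub_one_mul_d₁_le_mul_d₂_of_nonneg hp hz,
      mul_nonneg (by linarith : (0 : ℝ) ≤ p - 1) (d₁_nonneg hp z)]

theorem d₁_isTheta_d₂_Ici (hp : 1 < p) : d₁ p =Θ[𝓟 (Ici 0)] d₂ p :=
  ⟨isBigO_principal_of_mul_le_mul (by linarith) (fun z _ => d₁_nonneg hp z)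
      fun _ hz => sub_one_mul_d₁_le_mul_d₂_of_nonneg hp hz,
    isBigO_principal_of_mul_le_mul one_pos (fun z _ => d₂_nonneg hp z)
      fun _ hz => by simpa using d₂_le_mul_d₁_of_nonneg hp hz⟩

theorem d₁_isTheta_d₃_Ici (hp : 1 < p) : d₁ p =Θ[𝓟 (Ici 0)] d₃ p :=
  ⟨isBigO_principal_of_mul_le_mul (C := 1) one_pos (fun z _ => d₁_nonneg hp z)
      fun _ hz => by simpa using d₁_le_d₃_of_nonneg hp hz,
    isBigO_principal_of_mul_le_mul (C := 1) (min_two_div_pos hp) (fun z _ => d₃_nonneg p z)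
      fun _ hz => by simpa using min_mul_d₃_le_d₁_of_nonneg hp hz⟩

theorem d₁_isTheta_Iio (hp : 1 < p) : d₁ p =Θ[𝓟 (Iio 0)] fun z => 1 + |z| ^ p := by
  have key : ∀ z ∈ Iio (0 : ℝ), 1 + |z| ^ p ≤ d₁ p z ∧ d₁ p z ≤ 3 * (1 + |z| ^ p) := by
    intro z hz
    have hw := abs_nonneg z
    have hmul := rpow_sub_one_mul_self hw (by linarith : p ≠ 0)
    have h₁ := rpow_le_one_add_rpow hw zero_le_one hp.le
    have h₂ := rpow_le_one_add_rpow hw (by linarith : 0 ≤ p - 1) (by linarith : p - 1 ≤ p)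
    rw [rpow_one] at h₁
    rw [d₁_eq_of_neg hz]
    constructor <;> nlinarith [rpow_nonneg hw (p - 1)]
  refine ⟨isBigO_principal_of_mul_le_mul (C := 3) one_pos (fun z _ => d₁_nonneg hp z)
      fun z hz => ?_,
    isBigO_principal_of_mul_le_mul (C := 1) one_pos (fun z _ => by positivity) fun z hz => ?_⟩
  all_goals linarith [key z hz]

theorem d₂_isTheta_Iio (hp : 1 < p) : d₂ p =Θ[𝓟 (Iio 0)] fun z => 1 + |z| ^ p := by
  have key : ∀ z ∈ Iio (0 : ℝ),
      (p - 1) * (1 + |z| ^ p) ≤ p * d₂ p z ∧ d₂ p z ≤ 2 * p * (1 + |z| ^ p) := by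
    intro z hz
    have hw := abs_nonneg z
    have h₁ := rpow_le_one_add_rpow hw zero_le_one hp.le
    rw [rpow_one] at h₁
    rw [d₂_eq_of_neg hz]
    constructor <;> nlinarith [rpow_nonneg hw p, mul_nonneg (sq_nonneg p) hw]
  refine ⟨isBigO_principal_of_mul_le_mul (C := 2 * p) one_pos (fun z _ => d₂_nonneg hp z)
      fun z hz => ?_,
    isBigO_principal_of_mul_le_mul (c := p - 1) (C := p) (by linarith) (fun z _ => by positivity)
      fun z hz => ?_⟩
  · linarith [key z hz]
  · exact (key z hz).1

theorem d₃_isTheta_Iio (hp : 1 < p) : d₃ p =Θ[𝓟 (Iio 0)] fun z => 1 + |z| ^ p := by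
  have key : ∀ z ∈ Iio (0 : ℝ), 1 + |z| ^ p ≤ d₃ p z ∧ d₃ p z ≤ 3 * (1 + |z| ^ p) := by
    intro z hz
    have hw := abs_nonneg z
    have hsq : (|z| ^ (p / 2)) ^ 2 = |z| ^ p := by
      rw [← rpow_natCast, ← rpow_mul hw]; norm_num
    have h₁ := rpow_le_one_add_rpow hw (by linarith : 0 ≤ p / 2) (by linarith : p / 2 ≤ p)
    rw [d₃_eq_of_neg hz]
    constructor <;> nlinarith [rpow_nonneg hw (p / 2)]
  refine ⟨isBigO_principal_of_mul_le_mul (C := 3) one_pos (fun z _ => d₃_nonneg p z)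
      fun z hz => ?_,
    isBigO_principal_of_mul_le_mul (C := 1) one_pos (fun z _ => by positivity) fun z hz => ?_⟩
  all_goals linarith [key z hz]

theorem d₁_isTheta_d₂ (hp : 1 < p) : d₁ p =Θ[⊤] d₂ p :=
  isTheta_top_of_Iio_of_Ici ((d₁_isTheta_Iio hp).trans (d₂_isTheta_Iio hp).symm)
    (d₁_isTheta_d₂_Ici hp)

theorem d₁_isTheta_d₃ (hp : 1 < p) : d₁ p =Θ[⊤] d₃ p :=
  isTheta_top_of_Iio_of_Ici ((d₁_isTheta_Iio hp).trans (d₃_isTheta_Iio hp).symm)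
    (d₁_isTheta_d₃_Ici hp)

end SignedPowerDissipation

open SignedPowerDissipation

theorem stmt0 (p : ℝ) (hp : 1 < p) :
    (∀ z : ℝ,
        0 ≤ (z - 1) * (sgnPow (p - 1) z - 1) ∧
        0 ≤ |z| ^ p - 1 - p * (z - 1) ∧
        0 ≤ (sgnPow (p / 2) z - 1) ^ 2) ∧
    ∃ c C : ℝ, 0 < c ∧ c ≤ C ∧
      ∀ z : ℝ,
        c * (|z| ^ p - 1 - p * (z - 1)) ≤ (z - 1) * (sgnPow (p - 1) z - 1) ∧
        (z - 1) * (sgnPow (p - 1) z - 1) ≤ C * (|z| ^ p - 1 - p * (z - 1)) ∧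
        c * (sgnPow (p / 2) z - 1) ^ 2 ≤ (z - 1) * (sgnPow (p - 1) z - 1) ∧
        (z - 1) * (sgnPow (p - 1) z - 1) ≤ C * (sgnPow (p / 2) z - 1) ^ 2 := by
  obtain ⟨c₂, C₂, hc₂, h₂⟩ :=
    exists_bounds_of_isTheta_top (d₁_nonneg hp) (d₂_nonneg hp) (d₁_isTheta_d₂ hp)
  obtain ⟨c₃, C₃, hc₃, h₃⟩ :=
    exists_bounds_of_isTheta_top (d₁_nonneg hp) (d₃_nonneg p) (d₁_isTheta_d₃ hp)
  refine ⟨fun z => ⟨d₁_nonneg hp z, d₂_nonneg hp z, d₃_nonneg p z⟩,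
    min c₂ c₃, max C₂ C₃, lt_min hc₂ hc₃, ?_, fun z => ⟨?_, ?_, ?_, ?_⟩⟩
  · have h₀ : d₃ p 0 = 1 := by simp [d₃, sgnPow]
    have := h₃ 0
    rw [h₀, mul_one, mul_one] at this
    linarith [min_le_right c₂ c₃, le_max_right C₂ C₃]
  · exact (mul_le_mul_of_nonneg_right (min_le_left _ _) (d₂_nonneg hp z)).trans (h₂ z).1
  · exact (h₂ z).2.trans (mul_le_mul_of_nonneg_right (le_max_left _ _) (d₂_nonneg hp z))
  · exact (mul_le_mul_of_nonneg_right (min_le_right _ _) (d₃_nonneg p z)).trans (h₃ z).1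
  · exact (h₃ z).2.trans (mul_le_mul_of_nonneg_right (le_max_right _ _) (d₃_nonneg p z))
end

section
/- Let d ∈ ℕ*, α ∈ (0,1), k ∈ (0,α), and m(x) := ⟨x⟩^k. Then there exists a constant C > 0 (depending only on d, α, k) such that for all x ∈ ℝ^d, ∫_{ℝ^d} |m(y) − m(x)| / |y−x|^{d+α} dy ≤ C ⟨x⟩^{k−α}. -/
open MeasureTheory

/-- Japanese bracket `⟨x⟩ = (1+|x|²)^{1/2}`. -/
noncomputable def jb {d : ℕ} (x : EuclideanSpace ℝ (Fin d)) : ℝ := Real.sqrt (1 + ‖x‖ ^ 2)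

/-!
Write `R = ⟨x⟩` and `z = y - x`. Since `⟨·⟩` is 1-Lipschitz and `⟨·⟩ ≥ 1`, on the ball `|z| ≤ R/2`
we have `⟨y⟩ ≥ R/2`, and the concavity of `t ↦ t^k` gives `|m(y) - m(x)| ≤ (R/2)^(k-1) |z|`;
outside the ball, subadditivity of `t ↦ t^k` gives `|m(y) - m(x)| ≤ |z|^k`. Integrating these
majorants against `|z|^(-d-α)` in polar coordinates (convergent because `α < 1` near the origin
and `k < α` at infinity), both pieces are multiples of `(R/2)^(k-α)`.
-/

open Set
open scoped ENNReal

local notation "dim" => Module.finrank ℝ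

namespace Real

lemma rpow_sub_rpow_le_rpow_sub_one_mul {a b p : ℝ} (hb : 0 < b) (hba : b ≤ a) (hp : p ≤ 1) :
    a ^ p - b ^ p ≤ b ^ (p - 1) * (a - b) := by
  have hratio : (a / b) ^ p ≤ a / b := by
    simpa using rpow_le_rpow_of_exponent_le ((one_le_div hb).mpr hba) hp
  calc a ^ p - b ^ p = b ^ p * (a / b) ^ p - b ^ p := by
        rw [← mul_rpow hb.le (div_nonneg (hb.le.trans hba) hb.le), mul_div_cancel₀ _ hb.ne']
    _ ≤ b ^ p * (a / b) - b ^ p := by gcongr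
    _ = b ^ (p - 1) * (a - b) := by
        rw [rpow_sub hb, rpow_one]; field_simp

lemma abs_rpow_sub_rpow_le_mul_abs_sub {a b c p : ℝ} (hc : 0 < c) (hca : c ≤ a) (hcb : c ≤ b)
    (hp₀ : 0 ≤ p) (hp₁ : p ≤ 1) : |a ^ p - b ^ p| ≤ c ^ (p - 1) * |a - b| := by
  wlog hba : b ≤ a generalizing a b
  · rw [abs_sub_comm, abs_sub_comm a]
    exact this hcb hca (not_le.mp hba).le
  have hb : 0 < b := hc.trans_le hcb
  rw [abs_of_nonneg (sub_nonneg.mpr (rpow_le_rpow hb.le hba hp₀)),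
    abs_of_nonneg (sub_nonneg.mpr hba)]
  calc a ^ p - b ^ p ≤ b ^ (p - 1) * (a - b) := rpow_sub_rpow_le_rpow_sub_one_mul hb hba hp₁
    _ ≤ c ^ (p - 1) * (a - b) :=
        mul_le_mul_of_nonneg_right (rpow_le_rpow_of_nonpos hc hcb (by linarith)) (by linarith)

lemma abs_rpow_sub_rpow_le_rpow_abs_sub {a b p : ℝ} (ha : 0 ≤ a) (hb : 0 ≤ b) (hp₀ : 0 ≤ p)
    (hp₁ : p ≤ 1) : |a ^ p - b ^ p| ≤ |a - b| ^ p := by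
  wlog hba : b ≤ a generalizing a b
  · rw [abs_sub_comm, abs_sub_comm a]
    exact this hb ha (not_le.mp hba).le
  rw [abs_of_nonneg (sub_nonneg.mpr (rpow_le_rpow hb hba hp₀)), abs_of_nonneg (sub_nonneg.mpr hba)]
  have := rpow_add_le_add_rpow hb (sub_nonneg.mpr hba) hp₀ hp₁
  rw [add_sub_cancel] at this
  linarith

lemma abs_sqrt_one_add_sq_sub_le (a b : ℝ) : |√(1 + a ^ 2) - √(1 + b ^ 2)| ≤ |a - b| := by
  set u := √(1 + a ^ 2)
  set v := √(1 + b ^ 2)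
  have hu : |a| ≤ u := abs_le_sqrt (by linarith)
  have hv : |b| ≤ v := abs_le_sqrt (by linarith)
  have huv : 0 < u + v := by
    linarith [abs_nonneg a, sqrt_pos.mpr (by positivity : (0 : ℝ) < 1 + b ^ 2)]
  have hdiff : (u - v) * (u + v) = (a - b) * (a + b) := by
    linear_combination sq_sqrt (by positivity : (0 : ℝ) ≤ 1 + a ^ 2) -
      sq_sqrt (by positivity : (0 : ℝ) ≤ 1 + b ^ 2)
  refine le_of_mul_le_mul_right ?_ huv
  calc |u - v| * (u + v) = |a - b| * |a + b| := by
        rw [← abs_of_pos huv, ← abs_mul, hdiff, abs_mul]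
    _ ≤ |a - b| * (u + v) := by gcongr; exact (abs_add_le a b).trans (add_le_add hu hv)

end Real

section Japanese

variable {d : ℕ}

lemma one_le_jb (x : EuclideanSpace ℝ (Fin d)) : 1 ≤ jb x :=
  Real.one_le_sqrt.mpr (by nlinarith [sq_nonneg ‖x‖])

lemma abs_jb_sub_jb_le (x y : EuclideanSpace ℝ (Fin d)) : |jb x - jb y| ≤ ‖x - y‖ :=
  (Real.abs_sqrt_one_add_sq_sub_le ‖x‖ ‖y‖).trans (abs_norm_sub_norm_le x y)

lemma abs_jb_rpow_sub_jb_rpow_le {k : ℝ} (hk₀ : 0 ≤ k) (hk₁ : k ≤ 1)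
    (x y : EuclideanSpace ℝ (Fin d)) : |jb y ^ k - jb x ^ k| ≤ ‖y - x‖ ^ k :=
  (Real.abs_rpow_sub_rpow_le_rpow_abs_sub (by linarith [one_le_jb y]) (by linarith [one_le_jb x])
    hk₀ hk₁).trans (Real.rpow_le_rpow (abs_nonneg _) (abs_jb_sub_jb_le y x) hk₀)

lemma abs_jb_add_rpow_sub_jb_rpow_le {k : ℝ} (hk₀ : 0 ≤ k) (hk₁ : k ≤ 1)
    {x z : EuclideanSpace ℝ (Fin d)} (hz : ‖z‖ ≤ jb x / 2) :
    |jb (z + x) ^ k - jb x ^ k| ≤ (jb x / 2) ^ (k - 1) * ‖z‖ := by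
  have hdist : |jb (z + x) - jb x| ≤ ‖z‖ := by simpa using abs_jb_sub_jb_le (z + x) x
  refine (Real.abs_rpow_sub_rpow_le_mul_abs_sub (c := jb x / 2) (by linarith [one_le_jb x]) ?_
    (by linarith [one_le_jb x]) hk₀ hk₁).trans ?_
  · linarith [(abs_le.mp hdist).1]
  · exact mul_le_mul_of_nonneg_left hdist (Real.rpow_nonneg (by linarith [one_le_jb x]) _)

end Japanese

lemma div_rpow_le_mul_rpow_sub {u A t e D : ℝ} (ht : 0 < t) (h : u ≤ A * t ^ e) :
    u / t ^ D ≤ A * t ^ (e - D) := by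
  rw [Real.rpow_sub ht, ← mul_div_assoc]
  exact div_le_div_of_nonneg_right h (Real.rpow_nonneg ht.le _)

lemma abs_div_rpow_le_mul_rpow_one_sub {u A t D : ℝ} (hA : 0 ≤ A) (ht : 0 ≤ t)
    (h : |u| ≤ A * t) : |u| / t ^ D ≤ A * t ^ (1 - D) := by
  rcases ht.eq_or_lt with rfl | ht
  · rw [show u = 0 by simpa using h, abs_zero, zero_div]
    exact mul_nonneg hA (Real.rpow_nonneg le_rfl _)
  · exact div_rpow_le_mul_rpow_sub ht (by simpa using h)

section Polar

variable {E : Type*} [NormedAddCommGroup E] [NormedSpace ℝ E] [MeasurableSpace E] [BorelSpace E]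
  [FiniteDimensional ℝ E] [Nontrivial E] (μ : Measure E) [μ.IsAddHaarMeasure]

lemma MeasureTheory.Measure.toSphere_real_univ_pos : 0 < μ.toSphere.real univ :=
  ENNReal.toReal_pos (Measure.measure_univ_ne_zero.mpr μ.toSphere_ne_zero) (measure_ne_top _ _)

lemma lintegral_fun_norm_addHaar {f : ℝ → ℝ≥0∞} (hf : Measurable f) :
    ∫⁻ x, f ‖x‖ ∂μ =
      μ.toSphere univ * ∫⁻ r in Ioi (0 : ℝ), ENNReal.ofReal (r ^ (dim E - 1)) * f r := by
  have hmeas : Measurable fun p : Metric.sphere (0 : E) 1 × Ioi (0 : ℝ) ↦ f p.2 :=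
    hf.comp (measurable_subtype_coe.comp measurable_snd)
  calc
    ∫⁻ x, f ‖x‖ ∂μ = ∫⁻ x : ({(0)}ᶜ : Set E), f ‖x.1‖ ∂(μ.comap (↑)) := by
      rw [lintegral_subtype_comap (measurableSet_singleton _).compl fun x ↦ f ‖x‖,
        restrict_compl_singleton]
    _ = ∫⁻ x, f x.2 ∂μ.toSphere.prod (.volumeIoiPow (dim E - 1)) := by
      rw [← μ.measurePreserving_homeomorphUnitSphereProd.lintegral_comp hmeas]
      simp only [homeomorphUnitSphereProd_apply_snd_coe]
    _ = μ.toSphere univ * ∫⁻ r : Ioi (0 : ℝ), f r ∂(.volumeIoiPow (dim E - 1)) := by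
      rw [lintegral_prod _ hmeas.aemeasurable]
      simp [lintegral_const, mul_comm]
    _ = μ.toSphere univ * ∫⁻ r in Ioi (0 : ℝ), ENNReal.ofReal (r ^ (dim E - 1)) * f r := by
      rw [Measure.volumeIoiPow, lintegral_withDensity_eq_lintegral_mul _ (by fun_prop)
        (show Measurable fun r : Ioi (0 : ℝ) ↦ f r from hf.comp measurable_subtype_coe),
        ← lintegral_subtype_comap measurableSet_Ioi]
      rfl

lemma setLIntegral_preimage_norm {f : ℝ → ℝ≥0∞} (hf : Measurable f) {s : Set ℝ}
    (hs : MeasurableSet s) :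
    ∫⁻ x in (‖·‖) ⁻¹' s, f ‖x‖ ∂μ =
      μ.toSphere univ * ∫⁻ r in s ∩ Ioi 0, ENNReal.ofReal (r ^ (dim E - 1)) * f r := by
  have hind : ((‖·‖) ⁻¹' s).indicator (fun x : E ↦ f ‖x‖) = fun x ↦ s.indicator f ‖x‖ :=
    rfl
  rw [← lintegral_indicator (hs.preimage measurable_norm), hind,
    lintegral_fun_norm_addHaar μ (hf.indicator hs), ← setLIntegral_indicator hs]
  simp only [indicator_mul_right]

lemma setLIntegral_preimage_norm_rpow (p : ℝ) {s : Set ℝ} (hs : MeasurableSet s) :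
    ∫⁻ x in (‖·‖) ⁻¹' s, ENNReal.ofReal (‖x‖ ^ p) ∂μ =
      μ.toSphere univ * ∫⁻ r in s ∩ Ioi 0, ENNReal.ofReal (r ^ (p + dim E - 1)) := by
  rw [setLIntegral_preimage_norm μ (f := fun r ↦ ENNReal.ofReal (r ^ p)) (by fun_prop) hs]
  congr 1
  refine setLIntegral_congr_fun (hs.inter measurableSet_Ioi) fun r hr ↦ ?_
  rw [← ENNReal.ofReal_mul (pow_nonneg hr.2.le _), ← Real.rpow_natCast,
    Nat.cast_pred Module.finrank_pos, ← Real.rpow_add hr.2]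
  ring_nf

lemma setLIntegral_norm_le_rpow {p r : ℝ} (hp : -(dim E : ℝ) < p) (hr : 0 ≤ r) :
    ∫⁻ x in {x : E | ‖x‖ ≤ r}, ENNReal.ofReal (‖x‖ ^ p) ∂μ =
      ENNReal.ofReal (μ.toSphere.real univ * (r ^ (p + dim E) / (p + dim E))) := by
  have hq : -1 < p + dim E - 1 := by linarith
  rw [show {x : E | ‖x‖ ≤ r} = (‖·‖) ⁻¹' Iic r from rfl,
    setLIntegral_preimage_norm_rpow μ p measurableSet_Iic, Iic_inter_Ioi,
    ← ofReal_integral_eq_lintegral_ofReal, ← intervalIntegral.integral_of_le hr,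
    integral_rpow (.inl hq), ENNReal.ofReal_mul measureReal_nonneg, ofReal_measureReal]
  · rw [sub_add_cancel, Real.zero_rpow (by linarith), sub_zero]
  · exact (intervalIntegral.intervalIntegrable_rpow' hq).1
  · filter_upwards [ae_restrict_mem measurableSet_Ioc] with t ht
    exact Real.rpow_nonneg ht.1.le _

lemma setLIntegral_lt_norm_rpow {p r : ℝ} (hp : p + dim E < 0) (hr : 0 < r) :
    ∫⁻ x in {x : E | r < ‖x‖}, ENNReal.ofReal (‖x‖ ^ p) ∂μ =
      ENNReal.ofReal (μ.toSphere.real univ * (r ^ (p + dim E) / -(p + dim E))) := by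
  have hq : p + dim E - 1 < -1 := by linarith
  rw [show {x : E | r < ‖x‖} = (‖·‖) ⁻¹' Ioi r from rfl,
    setLIntegral_preimage_norm_rpow μ p measurableSet_Ioi,
    inter_eq_left.mpr (Ioi_subset_Ioi hr.le), ← ofReal_integral_eq_lintegral_ofReal,
    integral_Ioi_rpow_of_lt hq hr, ENNReal.ofReal_mul measureReal_nonneg, ofReal_measureReal]
  · rw [sub_add_cancel, neg_div, div_neg]
  · exact integrableOn_Ioi_rpow_of_lt hq hr
  · filter_upwards [ae_restrict_mem measurableSet_Ioi] with t ht
    exact Real.rpow_nonneg (hr.trans ht).le _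

lemma lintegral_abs_div_rpow_norm_le {g : E → ℝ} {r α k : ℝ} (hr : 0 < r) (hα : α < 1)
    (hkα : k < α) (hnear : ∀ z, ‖z‖ ≤ r → |g z| ≤ r ^ (k - 1) * ‖z‖)
    (hfar : ∀ z, r < ‖z‖ → |g z| ≤ ‖z‖ ^ k) :
    ∫⁻ z, ENNReal.ofReal (|g z| / ‖z‖ ^ ((dim E : ℝ) + α)) ∂μ ≤
      ENNReal.ofReal (μ.toSphere.real univ * (1 / (1 - α) + 1 / (α - k)) * r ^ (k - α)) := by
  set D := (dim E : ℝ) + α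
  set A := r ^ (k - 1)
  have hA : 0 ≤ A := Real.rpow_nonneg hr.le _
  have hnear' : ∀ z ∈ {z : E | ‖z‖ ≤ r}, ENNReal.ofReal (|g z| / ‖z‖ ^ D) ≤
      ENNReal.ofReal A * ENNReal.ofReal (‖z‖ ^ (1 - D)) := by
    intro z hz
    rw [← ENNReal.ofReal_mul hA]
    exact ENNReal.ofReal_le_ofReal
      (abs_div_rpow_le_mul_rpow_one_sub hA (norm_nonneg z) (hnear z hz))
  have hfar' : ∀ z ∈ {z : E | r < ‖z‖}, ENNReal.ofReal (|g z| / ‖z‖ ^ D) ≤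
      ENNReal.ofReal (‖z‖ ^ (k - D)) := fun z hz ↦ ENNReal.ofReal_le_ofReal
    (by simpa using div_rpow_le_mul_rpow_sub (A := 1) (hr.trans hz) (by simpa using hfar z hz))
  have hcompl : {z : E | ‖z‖ ≤ r}ᶜ = {z | r < ‖z‖} := by ext; simp
  have e₁ : 1 - D + dim E = 1 - α := by ring
  have e₂ : k - D + dim E = k - α := by ring
  calc ∫⁻ z, ENNReal.ofReal (|g z| / ‖z‖ ^ D) ∂μ
      = ∫⁻ z in {z | ‖z‖ ≤ r}, ENNReal.ofReal (|g z| / ‖z‖ ^ D) ∂μ +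
          ∫⁻ z in {z | r < ‖z‖}, ENNReal.ofReal (|g z| / ‖z‖ ^ D) ∂μ := by
        rw [← hcompl, lintegral_add_compl _ (measurableSet_le measurable_norm measurable_const)]
    _ ≤ ENNReal.ofReal A * ∫⁻ z in {z | ‖z‖ ≤ r}, ENNReal.ofReal (‖z‖ ^ (1 - D)) ∂μ +
          ∫⁻ z in {z | r < ‖z‖}, ENNReal.ofReal (‖z‖ ^ (k - D)) ∂μ := by
        rw [← lintegral_const_mul' _ _ ENNReal.ofReal_ne_top]
        exact add_le_add (setLIntegral_mono (by fun_prop) hnear')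
          (setLIntegral_mono (by fun_prop) hfar')
    _ = _ := by
        rw [setLIntegral_norm_le_rpow μ (by linarith) hr.le,
          setLIntegral_lt_norm_rpow μ (by linarith) hr, e₁, e₂, neg_sub,
          ← ENNReal.ofReal_mul hA, ← ENNReal.ofReal_add
            (mul_nonneg hA (mul_nonneg measureReal_nonneg
              (div_nonneg (Real.rpow_nonneg hr.le _) (by linarith))))
            (mul_nonneg measureReal_nonneg
              (div_nonneg (Real.rpow_nonneg hr.le _) (by linarith)))]
        have hA_mul : A * r ^ (1 - α) = r ^ (k - α) := by rw [← Real.rpow_add hr]; ring_nf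
        congr 1
        linear_combination μ.toSphere.real univ / (1 - α) * hA_mul

end Polar

theorem stmt2 (d : ℕ) (hd : 0 < d) (α k : ℝ) (hα : 0 < α ∧ α < 1) (hk : 0 < k ∧ k < α) :
    ∃ C : ℝ, 0 < C ∧ ∀ x : EuclideanSpace ℝ (Fin d),
      ∫⁻ y : EuclideanSpace ℝ (Fin d),
          ENNReal.ofReal (|jb y ^ k - jb x ^ k| / ‖y - x‖ ^ ((d : ℝ) + α)) ≤
        ENNReal.ofReal (C * jb x ^ (k - α)) := by
  obtain ⟨-, hα₁⟩ := hα
  obtain ⟨hk₀, hkα⟩ := hk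
  have hk₁ : k ≤ 1 := by linarith
  have : Nonempty (Fin d) := ⟨⟨0, hd⟩⟩
  set S := (volume : Measure (EuclideanSpace ℝ (Fin d))).toSphere.real univ
  have hS : 0 < S := Measure.toSphere_real_univ_pos _
  have hsum : 0 < 1 / (1 - α) + 1 / (α - k) :=
    add_pos (one_div_pos.mpr (sub_pos.mpr hα₁)) (one_div_pos.mpr (sub_pos.mpr hkα))
  refine ⟨S * (1 / (1 - α) + 1 / (α - k)) * 2 ^ (α - k), by positivity, fun x ↦ ?_⟩
  have hjb : 0 < jb x := by linarith [one_le_jb x]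
  have hbound := lintegral_abs_div_rpow_norm_le volume (g := fun z ↦ jb (z + x) ^ k - jb x ^ k)
    (half_pos hjb) hα₁ hkα (fun z hz ↦ abs_jb_add_rpow_sub_jb_rpow_le hk₀.le hk₁ hz)
    (fun z _ ↦ by simpa using abs_jb_rpow_sub_jb_rpow_le hk₀.le hk₁ x (z + x))
  have hscale : (jb x / 2) ^ (k - α) = 2 ^ (α - k) * jb x ^ (k - α) := by
    rw [Real.div_rpow hjb.le zero_le_two, div_eq_inv_mul, ← Real.rpow_neg zero_le_two, neg_sub]
  rw [finrank_euclideanSpace_fin, hscale, ← mul_assoc] at hbound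
  rw [← lintegral_add_right_eq_self _ x]
  simpa only [add_sub_cancel_right] using hbound
end

section
/- Let d ∈ ℕ*, p ∈ (1,∞) with Hölder conjugate q = p/(p−1), E : ℝ^d → ℝ^d a C¹ vector field, m : ℝ^d → (0,∞) a C¹ function, and u ∈ C_c^∞(ℝ^d). Then ∫_{ℝ^d} div(Eu)(x) · u(x)^{p−1} m(x)^p dx = ∫_{ℝ^d} |u(x)|^p m(x)^p ( div E(x)/q − E(x)·∇m(x)/m(x) ) dx, where u^{p−1} denotes the signed power |u|^{p−2}u. -/
open MeasureTheory

/-- Divergence of a vector field on `ℝ^d`. -/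
noncomputable def diverg {d : ℕ}
    (F : EuclideanSpace ℝ (Fin d) → EuclideanSpace ℝ (Fin d))
    (x : EuclideanSpace ℝ (Fin d)) : ℝ :=
  ∑ i, fderiv ℝ F x (EuclideanSpace.single i 1) i

section Aux

variable {d : ℕ}

local notation "ES" => EuclideanSpace ℝ (Fin d)

lemma sum_eval (ℓ : ES →L[ℝ] ℝ) (y : ES) :
    ∑ i, ℓ (EuclideanSpace.single i 1) * y i = ℓ y := by
  have hy : y = ∑ i, y i • EuclideanSpace.single i 1 := by
    ext j
    rw [WithLp.ofLp_sum, Fintype.sum_apply]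
    simp [EuclideanSpace.single_apply]
  conv_rhs => rw [hy, map_sum]
  simp [mul_comm]

lemma diverg_eq {F : ES → ES} {L : ES →L[ℝ] ES} {x : ES} (hF : HasFDerivAt F L x) :
    diverg F x = ∑ i, L (EuclideanSpace.single i 1) i := by
  rw [diverg, hF.fderiv]

lemma z_mul_sgnPow {p : ℝ} (hp : 1 < p) (z : ℝ) : z * sgnPow (p - 1) z = |z| ^ p := by
  rcases eq_or_ne z 0 with rfl | hz
  · simp [sgnPow, Real.zero_rpow (by positivity : p ≠ 0)]
  · have h0 : |z| ≠ 0 := abs_ne_zero.2 hz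
    have : z * sgnPow (p - 1) z = |z| ^ (p - 1 - 1) * (|z| * |z|) := by
      rw [sgnPow, abs_mul_abs_self]; ring
    rw [this, ← mul_assoc, ← Real.rpow_add_one h0, ← Real.rpow_add_one h0]
    norm_num

lemma continuous_sgnPow {p : ℝ} (hp : 1 < p) : Continuous (sgnPow (p - 1)) := by
  have h1 : Continuous fun z : ℝ => fderiv ℝ (fun t : ℝ => |t| ^ p) z 1 := by
    have hc : ContDiff ℝ 1 fun t : ℝ => |t| ^ p := by
      simpa [Real.norm_eq_abs] using (contDiff_norm_rpow (E := ℝ) hp)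
    exact (hc.continuous_fderiv one_ne_zero).clm_apply continuous_const
  have h2 : ∀ z : ℝ, fderiv ℝ (fun t : ℝ => |t| ^ p) z 1 = p * sgnPow (p - 1) z := by
    intro z
    have := (hasDerivAt_abs_rpow z hp).deriv
    rw [show (fderiv ℝ (fun t : ℝ => |t| ^ p) z) 1 = deriv (fun t : ℝ => |t| ^ p) z from rfl, this,
      sgnPow]
    ring_nf
  have h3 : Continuous fun z : ℝ => p * sgnPow (p - 1) z := by
    simpa [h2] using h1
  have hp0 : p ≠ 0 := by positivity
  have : (sgnPow (p - 1)) = fun z => (1 / p) * (p * sgnPow (p - 1) z) := by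
    funext z; field_simp
  rw [this]
  exact continuous_const.mul h3

lemma integral_lineDeriv_eq_zero {C : NNReal} {g : ES → ℝ} (hg : LipschitzWith C g)
    (h'g : HasCompactSupport g) (v : ES) :
    ∫ x : ES, lineDeriv ℝ g x v = 0 := by
  have h1 : LipschitzWith 0 (fun _ : ES => (1 : ℝ)) := LipschitzWith.const 1
  have h2 := LipschitzWith.integral_lineDeriv_mul_eq (μ := volume) h1 hg h'g (-v)
  have h3 : ∀ x : ES, lineDeriv ℝ (fun _ : ES => (1 : ℝ)) x (-v) = 0 := fun x => by
    simpa using ((hasFDerivAt_const (1 : ℝ) x).hasLineDerivAt (-v)).lineDeriv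
  simpa [h3] using h2.symm

lemma integral_diverg_eq_zero {G : ES → ES} (hG : ContDiff ℝ 1 G)
    (h'G : HasCompactSupport G) :
    ∫ x : ES, diverg G x = 0 := by
  obtain ⟨C, hC⟩ := hG.lipschitzWith_of_hasCompactSupport h'G one_ne_zero
  have hGdiff : Differentiable ℝ G := hG.differentiable one_ne_zero
  have hfderiv : Continuous fun x : ES => fderiv ℝ G x := hG.continuous_fderiv one_ne_zero
  have hint : ∀ i : Fin d,
      Integrable (fun x : ES => fderiv ℝ G x (EuclideanSpace.single i 1) i) volume := by
    intro i
    apply Continuous.integrable_of_hasCompactSupport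
    · exact (EuclideanSpace.proj i).continuous.comp (hfderiv.clm_apply continuous_const)
    · exact ((h'G.fderiv ℝ).comp_left
        (g := fun L : ES →L[ℝ] ES => L (EuclideanSpace.single i 1) i) (by simp))
  have : ∀ i : Fin d, ∫ x : ES, fderiv ℝ G x (EuclideanSpace.single i 1) i = 0 := by
    intro i
    have hgi := ((EuclideanSpace.proj (𝕜 := ℝ) i : ES →L[ℝ] ℝ)).lipschitz.comp hC
    have hgisupp : HasCompactSupport (fun x : ES => G x i) :=
      h'G.comp_left (g := fun y : ES => y i) (by simp)
    have hline : ∀ x : ES, lineDeriv ℝ (fun y : ES => G y i) x (EuclideanSpace.single i 1)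
        = fderiv ℝ G x (EuclideanSpace.single i 1) i := by
      intro x
      have : HasFDerivAt (fun y : ES => G y i)
          ((EuclideanSpace.proj (𝕜 := ℝ) i).comp (fderiv ℝ G x)) x :=
        (EuclideanSpace.proj (𝕜 := ℝ) i).hasFDerivAt.comp x (hGdiff x).hasFDerivAt
      simpa using (this.hasLineDerivAt (EuclideanSpace.single i 1)).lineDeriv
    rw [← integral_congr_ae (Filter.EventuallyEq.of_eq (funext hline))]
    exact integral_lineDeriv_eq_zero hgi hgisupp _
  simp only [diverg]
  rw [integral_finset_sum _ (fun i _ => hint i)]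
  simp [this]

lemma scalar_key {p q : ℝ} (hp : 1 < p) (hq : q = p / (p - 1)) (z A U mm B : ℝ)
    (hmm : 0 < mm) :
    (z * A + U) * sgnPow (p - 1) z * mm ^ p
    = (1 / p) * ((|z| ^ p * mm ^ p) * A
        + (|z| ^ p * ((p * mm ^ (p - 1)) * B) + mm ^ p * ((p * sgnPow (p - 1) z) * U)))
      + |z| ^ p * mm ^ p * (A / q - B / mm) := by
  have hp0 : p ≠ 0 := by positivity
  have hp1 : p - 1 ≠ 0 := sub_ne_zero.mpr hp.ne'
  have hq1 : 1 / p + 1 / q = 1 := by rw [hq]; field_simp; ring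
  have hzs := z_mul_sgnPow hp z
  have hm1 : mm ^ (p - 1) * mm = mm ^ p := by
    rw [Real.rpow_sub_one hmm.ne']; field_simp
  have hmm0 : mm ≠ 0 := hmm.ne'
  linear_combination (norm := (field_simp; ring)) (A * mm ^ p) * hzs
    - (A * |z| ^ p * mm ^ p) * hq1 - (|z| ^ p * B / mm) * hm1

set_option maxHeartbeats 2000000 in
theorem stmt6 (d : ℕ) (hd : 0 < d) (p q : ℝ) (hp : 1 < p) (hq : q = p / (p - 1))
    (E : EuclideanSpace ℝ (Fin d) → EuclideanSpace ℝ (Fin d)) (hE : ContDiff ℝ 1 E)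
    (m : EuclideanSpace ℝ (Fin d) → ℝ) (hm : ContDiff ℝ 1 m) (hm0 : ∀ x, 0 < m x)
    (u : EuclideanSpace ℝ (Fin d) → ℝ) (hu : ContDiff ℝ (⊤ : ℕ∞) u)
    (husupp : HasCompactSupport u) :
    ∫ x : EuclideanSpace ℝ (Fin d),
        diverg (fun y => u y • E y) x * sgnPow (p - 1) (u x) * m x ^ p =
      ∫ x : EuclideanSpace ℝ (Fin d),
        |u x| ^ p * m x ^ p *
          (diverg E x / q - (inner ℝ (E x) (gradient m x) : ℝ) / m x) := by
  have hp0 : p ≠ 0 := by positivity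
  have hu1 : ContDiff ℝ 1 u := hu.of_le (by simp)
  have Du : ∀ x, HasFDerivAt u (fderiv ℝ u x) x :=
    fun x => (hu1.differentiable one_ne_zero x).hasFDerivAt
  have Dm : ∀ x, HasFDerivAt m (fderiv ℝ m x) x :=
    fun x => (hm.differentiable one_ne_zero x).hasFDerivAt
  have DE : ∀ x, HasFDerivAt E (fderiv ℝ E x) x :=
    fun x => (hE.differentiable one_ne_zero x).hasFDerivAt
  -- derivative of |u|^p
  have hh : ∀ x, HasFDerivAt (fun y => |u y| ^ p)
      ((p * sgnPow (p - 1) (u x)) • fderiv ℝ u x) x := by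
    intro x
    have h1 := (hasDerivAt_abs_rpow (u x) hp).comp_hasFDerivAt x (Du x)
    have h2 : p * |u x| ^ (p - 2) * u x = p * sgnPow (p - 1) (u x) := by
      rw [sgnPow, show p - 1 - 1 = p - 2 by ring]; ring
    simpa [Function.comp_def, h2] using h1
  -- derivative of m^p
  have hM : ∀ x, HasFDerivAt (fun y => m y ^ p)
      ((p * m x ^ (p - 1)) • fderiv ℝ m x) x := by
    intro x
    have h1 := (Real.hasDerivAt_rpow_const (x := m x) (p := p)
      (Or.inl (hm0 x).ne')).comp_hasFDerivAt x (Dm x)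
    simpa [Function.comp_def] using h1
  -- product of the two
  have hc : ∀ x, HasFDerivAt (fun y => |u y| ^ p * m y ^ p)
      ((|u x| ^ p) • ((p * m x ^ (p - 1)) • fderiv ℝ m x)
        + (m x ^ p) • ((p * sgnPow (p - 1) (u x)) • fderiv ℝ u x)) x :=
    fun x => (hh x).mul (hM x)
  -- the auxiliary vector field G
  have hGat : ∀ x, HasFDerivAt (fun y => (|u y| ^ p * m y ^ p) • E y)
      ((|u x| ^ p * m x ^ p) • fderiv ℝ E x
        + ((|u x| ^ p) • ((p * m x ^ (p - 1)) • fderiv ℝ m x)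
            + (m x ^ p) • ((p * sgnPow (p - 1) (u x)) • fderiv ℝ u x)).smulRight (E x)) x :=
    fun x => (hc x).smul (DE x)
  have divG_eq : ∀ x, diverg (fun y => (|u y| ^ p * m y ^ p) • E y) x
      = (|u x| ^ p * m x ^ p) * diverg E x
        + (|u x| ^ p * ((p * m x ^ (p - 1)) * fderiv ℝ m x (E x))
            + m x ^ p * ((p * sgnPow (p - 1) (u x)) * fderiv ℝ u x (E x))) := by
    intro x
    rw [diverg_eq (hGat x)]
    have : ∀ i : Fin d,
        ((|u x| ^ p * m x ^ p) • fderiv ℝ E x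
          + ((|u x| ^ p) • ((p * m x ^ (p - 1)) • fderiv ℝ m x)
              + (m x ^ p) • ((p * sgnPow (p - 1) (u x)) • fderiv ℝ u x)).smulRight (E x))
          (EuclideanSpace.single i 1) i
        = (|u x| ^ p * m x ^ p) * (fderiv ℝ E x (EuclideanSpace.single i 1) i)
          + (|u x| ^ p * ((p * m x ^ (p - 1)) * fderiv ℝ m x (EuclideanSpace.single i 1))
              + m x ^ p * ((p * sgnPow (p - 1) (u x)) * fderiv ℝ u x (EuclideanSpace.single i 1)))
              * E x i := by
      intro i
      simp [ContinuousLinearMap.smulRight_apply, mul_add, mul_comm, mul_assoc, mul_left_comm]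
    rw [Finset.sum_congr rfl (fun i _ => this i), Finset.sum_add_distrib, ← Finset.mul_sum]
    have e1 := sum_eval (ℓ := (|u x| ^ p * ((p * m x ^ (p - 1)))) • fderiv ℝ m x
        + (m x ^ p * (p * sgnPow (p - 1) (u x))) • fderiv ℝ u x) (E x)
    simp only [ContinuousLinearMap.add_apply, ContinuousLinearMap.coe_smul', Pi.smul_apply,
      smul_eq_mul] at e1
    simp only [diverg, ← mul_assoc] at e1 ⊢
    rw [e1]
  -- divergence of u • E
  have hUEat : ∀ x, HasFDerivAt (fun y => u y • E y)
      ((u x) • fderiv ℝ E x + (fderiv ℝ u x).smulRight (E x)) x :=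
    fun x => (Du x).smul (DE x)
  have divUE_eq : ∀ x, diverg (fun y => u y • E y) x
      = u x * diverg E x + fderiv ℝ u x (E x) := by
    intro x
    rw [diverg_eq (hUEat x)]
    have : ∀ i : Fin d,
        ((u x) • fderiv ℝ E x + (fderiv ℝ u x).smulRight (E x))
          (EuclideanSpace.single i 1) i
        = u x * (fderiv ℝ E x (EuclideanSpace.single i 1) i)
          + fderiv ℝ u x (EuclideanSpace.single i 1) * E x i := by
      intro i
      simp [ContinuousLinearMap.smulRight_apply]
    rw [Finset.sum_congr rfl (fun i _ => this i), Finset.sum_add_distrib, ← Finset.mul_sum,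
      sum_eval]
    simp only [diverg]
  -- gradient and fderiv
  have hgrad : ∀ x, (inner ℝ (E x) (gradient m x) : ℝ) = fderiv ℝ m x (E x) := by
    intro x
    rw [real_inner_comm, gradient]
    exact InnerProductSpace.toDual_symm_apply
  -- pointwise key identity
  have key : ∀ x, diverg (fun y => u y • E y) x * sgnPow (p - 1) (u x) * m x ^ p
      = (1 / p) * diverg (fun y => (|u y| ^ p * m y ^ p) • E y) x
        + |u x| ^ p * m x ^ p *
            (diverg E x / q - fderiv ℝ m x (E x) / m x) := by
    intro x
    rw [divUE_eq x, divG_eq x]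
    exact scalar_key hp hq (u x) (diverg E x) (fderiv ℝ u x (E x)) (m x)
      (fderiv ℝ m x (E x)) (hm0 x)
  -- continuity facts
  have contDE : Continuous (diverg E) := by
    rw [show diverg E = fun x => ∑ i, fderiv ℝ E x (EuclideanSpace.single i 1) i from rfl]
    exact continuous_finset_sum _ fun i _ =>
      (EuclideanSpace.proj i).continuous.comp
        ((hE.continuous_fderiv one_ne_zero).clm_apply continuous_const)
  have contFm : Continuous fun x => fderiv ℝ m x (E x) :=
    (hm.continuous_fderiv one_ne_zero).clm_apply hE.continuous
  have contFu : Continuous fun x => fderiv ℝ u x (E x) :=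
    (hu1.continuous_fderiv one_ne_zero).clm_apply hE.continuous
  have contS : Continuous fun x => sgnPow (p - 1) (u x) :=
    (continuous_sgnPow hp).comp hu.continuous
  have contH : Continuous fun x => |u x| ^ p :=
    (hu.continuous.abs).rpow_const fun x => Or.inr (by positivity)
  have contM : Continuous fun x => m x ^ p :=
    hm.continuous.rpow_const fun x => Or.inl (hm0 x).ne'
  have contM1 : Continuous fun x => m x ^ (p - 1) :=
    hm.continuous.rpow_const fun x => Or.inl (hm0 x).ne'
  -- vanishing outside the support of u
  have hvan : ∀ x, x ∉ tsupport u → u x = 0 := fun x hx =>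
    image_eq_zero_of_notMem_tsupport hx
  have habs0 : ∀ x, x ∉ tsupport u → |u x| ^ p = 0 := fun x hx => by
    rw [hvan x hx]; simp [Real.zero_rpow hp0]
  have hsgn0 : ∀ x, x ∉ tsupport u → sgnPow (p - 1) (u x) = 0 := fun x hx => by
    rw [hvan x hx]; simp [sgnPow]
  -- integrability of the RHS integrand (with fderiv in place of gradient)
  have int2 : Integrable (fun x : (EuclideanSpace ℝ (Fin d)) => |u x| ^ p * m x ^ p *
      (diverg E x / q - fderiv ℝ m x (E x) / m x)) volume := by
    apply Continuous.integrable_of_hasCompactSupport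
    · exact (contH.mul contM).mul
        ((contDE.div_const q).sub (contFm.div hm.continuous fun x => (hm0 x).ne'))
    · apply HasCompactSupport.intro husupp
      intro x hx
      simp [habs0 x hx]
  -- integrability of diverg G
  have intG : Integrable (fun x : (EuclideanSpace ℝ (Fin d)) =>
      diverg (fun y => (|u y| ^ p * m y ^ p) • E y) x) volume := by
    rw [show (fun x : (EuclideanSpace ℝ (Fin d)) => diverg (fun y => (|u y| ^ p * m y ^ p) • E y) x)
      = fun x => (|u x| ^ p * m x ^ p) * diverg E x
        + (|u x| ^ p * ((p * m x ^ (p - 1)) * fderiv ℝ m x (E x))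
            + m x ^ p * ((p * sgnPow (p - 1) (u x)) * fderiv ℝ u x (E x)))
      from funext divG_eq]
    apply Continuous.integrable_of_hasCompactSupport
    · exact ((contH.mul contM).mul contDE).add
        ((contH.mul ((continuous_const.mul contM1).mul contFm)).add
          (contM.mul ((continuous_const.mul contS).mul contFu)))
    · apply HasCompactSupport.intro husupp
      intro x hx
      simp [habs0 x hx, hsgn0 x hx]
  -- the integral of diverg G vanishes
  have hG1 : ContDiff ℝ 1 fun y : (EuclideanSpace ℝ (Fin d)) => (|u y| ^ p * m y ^ p) • E y := by
    have h1 : ContDiff ℝ 1 fun y : (EuclideanSpace ℝ (Fin d)) => |u y| ^ p := by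
      have := (contDiff_norm_rpow (E := ℝ) hp).comp hu1
      simpa [Real.norm_eq_abs, Function.comp_def] using this
    have h2 : ContDiff ℝ 1 fun y : (EuclideanSpace ℝ (Fin d)) => m y ^ p :=
      hm.rpow_const_of_ne fun x => (hm0 x).ne'
    exact (h1.mul h2).smul hE
  have hGsupp : HasCompactSupport fun y : (EuclideanSpace ℝ (Fin d)) => (|u y| ^ p * m y ^ p) • E y := by
    apply HasCompactSupport.intro husupp
    intro x hx
    simp [habs0 x hx]
  have hGzero : ∫ x : (EuclideanSpace ℝ (Fin d)), diverg (fun y => (|u y| ^ p * m y ^ p) • E y) x = 0 :=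
    integral_diverg_eq_zero hG1 hGsupp
  -- assemble
  calc ∫ x : (EuclideanSpace ℝ (Fin d)), diverg (fun y => u y • E y) x * sgnPow (p - 1) (u x) * m x ^ p
      = ∫ x : (EuclideanSpace ℝ (Fin d)), ((1 / p) * diverg (fun y => (|u y| ^ p * m y ^ p) • E y) x
          + |u x| ^ p * m x ^ p * (diverg E x / q - fderiv ℝ m x (E x) / m x)) := by
        exact integral_congr_ae (Filter.EventuallyEq.of_eq (funext key))
    _ = (1 / p) * (∫ x : (EuclideanSpace ℝ (Fin d)),
            diverg (fun y => (|u y| ^ p * m y ^ p) • E y) x)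
          + ∫ x : (EuclideanSpace ℝ (Fin d)), |u x| ^ p * m x ^ p *
              (diverg E x / q - fderiv ℝ m x (E x) / m x) := by
        rw [integral_add (intG.const_mul (1 / p)) int2, integral_const_mul]
    _ = ∫ x : (EuclideanSpace ℝ (Fin d)), |u x| ^ p * m x ^ p *
          (diverg E x / q - fderiv ℝ m x (E x) / m x) := by
        rw [hGzero]; ring
    _ = ∫ x : (EuclideanSpace ℝ (Fin d)), |u x| ^ p * m x ^ p *
          (diverg E x / q - (inner ℝ (E x) (gradient m x) : ℝ) / m x) := by
        congr 1; funext x; rw [hgrad x]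

end Aux
end

section
/- Let d ∈ ℕ*, α ∈ (0,1), p ∈ (1,∞), and u ∈ C_c^∞(ℝ^d) real-valued. Define I(u)(x) := ∫_{ℝ^d} (u(y) − u(x)) / |y−x|^{d+α} dy. Then ∫_{ℝ^d} I(u)(x) u(x)^{p−1} dx = −(1/2) ∫_{ℝ^d}∫_{ℝ^d} (u(y) − u(x)) (u(y)^{p−1} − u(x)^{p−1}) / |y−x|^{d+α} dy dx ≤ 0, where u^{p−1} denotes the signed power |u|^{p−2}u and both integrals converge absolutely. -/
open MeasureTheory Metric Set Module

lemma sgnPow_zero (a : ℝ) : sgnPow a 0 = 0 := by simp [sgnPow]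

lemma sgnPow_neg (a z : ℝ) : sgnPow a (-z) = -sgnPow a z := by
  simp [sgnPow, abs_neg, mul_neg]

lemma abs_sgnPow {a : ℝ} (ha : 0 < a) (z : ℝ) : |sgnPow a z| = |z| ^ a := by
  rcases eq_or_ne z 0 with rfl | hz
  · simp [sgnPow, Real.zero_rpow ha.ne']
  · have hz' : |z| ≠ 0 := abs_ne_zero.2 hz
    rw [sgnPow, abs_mul, abs_of_nonneg (Real.rpow_nonneg (abs_nonneg z) _),
      ← Real.rpow_add_one hz' (a - 1)]
    ring_nf

lemma sgnPow_mono {a : ℝ} (ha : 0 < a) : Monotone (sgnPow a) := by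
  have aux : ∀ z w : ℝ, 0 ≤ z → z ≤ w → sgnPow a z ≤ sgnPow a w := by
    intro z w hz hzw
    have hw : 0 ≤ w := hz.trans hzw
    rcases eq_or_lt_of_le hz with rfl | hz'
    · rw [sgnPow_zero]
      exact mul_nonneg (Real.rpow_nonneg (abs_nonneg w) _) hw
    · have hw' : 0 < w := hz'.trans_le hzw
      rw [sgnPow, sgnPow, abs_of_nonneg hz, abs_of_nonneg hw,
        ← Real.rpow_add_one hz'.ne' (a - 1), ← Real.rpow_add_one hw'.ne' (a - 1),
        sub_add_cancel]
      exact Real.rpow_le_rpow hz hzw ha.le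
  intro z w h
  rcases le_total 0 z with hz | hz
  · exact aux z w hz h
  rcases le_total 0 w with hw | hw
  · have h1 : sgnPow a z ≤ 0 :=
      mul_nonpos_of_nonneg_of_nonpos (Real.rpow_nonneg (abs_nonneg z) _) hz
    have h2 : 0 ≤ sgnPow a w :=
      mul_nonneg (Real.rpow_nonneg (abs_nonneg w) _) hw
    linarith
  · have := aux (-w) (-z) (neg_nonneg.2 hw) (neg_le_neg h)
    rw [sgnPow_neg, sgnPow_neg] at this
    linarith

section Kernel

variable {E : Type*} [NormedAddCommGroup E] [NormedSpace ℝ E] [FiniteDimensional ℝ E]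
  [MeasurableSpace E] [BorelSpace E] (μ : Measure E) [μ.IsAddHaarMeasure]

/-- `‖x‖ ^ (-s)` is integrable near the origin when `s < dim`. -/
lemma integrableOn_norm_rpow_neg_ball {s : ℝ} (hs : 0 < s) (hsd : s < finrank ℝ E) :
    IntegrableOn (fun x : E => ‖x‖ ^ (-s)) (ball (0 : E) 1) μ := by
  have hmeas : Measurable fun x : E => ‖x‖ ^ (-s) := by measurability
  constructor
  · exact (hmeas.aestronglyMeasurable).restrict
  · have hnn : ∀ x : E, 0 ≤ ‖x‖ ^ (-s) := fun x => Real.rpow_nonneg (norm_nonneg x) _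
    rw [HasFiniteIntegral, lintegral_enorm_of_nonneg hnn,
      lintegral_eq_lintegral_meas_le _ (Filter.Eventually.of_forall hnn) hmeas.aemeasurable]
    -- the sublevel sets
    have hsub : ∀ t : ℝ, 0 < t →
        {a : E | t ≤ ‖a‖ ^ (-s)} ⊆ closedBall (0 : E) (t ^ (-s⁻¹)) := by
      intro t ht a ha
      simp only [mem_setOf_eq] at ha
      have ha0 : a ≠ 0 := by
        rintro rfl
        rw [norm_zero, Real.zero_rpow (by simpa using hs.ne')] at ha
        exact absurd (ht.trans_le ha) (lt_irrefl 0)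
      have hna : 0 < ‖a‖ := norm_pos_iff.2 ha0
      have := Real.rpow_le_rpow_of_nonpos ht ha (neg_nonpos.2 (inv_nonneg.2 hs.le))
      rw [← Real.rpow_mul (norm_nonneg a)] at this
      have hexp : -s * -s⁻¹ = 1 := by
        field_simp
      rw [hexp, Real.rpow_one] at this
      simpa [mem_closedBall, dist_zero_right] using this
    calc
      ∫⁻ t in Ioi (0:ℝ), (μ.restrict (ball (0:E) 1)) {a : E | t ≤ ‖a‖ ^ (-s)}
          ≤ ∫⁻ t in Ioc (0:ℝ) 1 ∪ Ioi 1, (μ.restrict (ball (0:E) 1)) {a : E | t ≤ ‖a‖ ^ (-s)} :=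
        lintegral_mono_set Ioi_subset_Ioc_union_Ioi
      _ ≤ (∫⁻ t in Ioc (0:ℝ) 1, (μ.restrict (ball (0:E) 1)) {a : E | t ≤ ‖a‖ ^ (-s)}) +
          ∫⁻ t in Ioi (1:ℝ), (μ.restrict (ball (0:E) 1)) {a : E | t ≤ ‖a‖ ^ (-s)} :=
        lintegral_union_le _ _ _
      _ < ⊤ := by
        refine ENNReal.add_lt_top.2 ⟨?_, ?_⟩
        · calc
            ∫⁻ t in Ioc (0:ℝ) 1, (μ.restrict (ball (0:E) 1)) {a : E | t ≤ ‖a‖ ^ (-s)}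
                ≤ ∫⁻ _ in Ioc (0:ℝ) 1, μ (ball (0:E) 1) := by
              refine lintegral_mono fun t => ?_
              exact (measure_mono (subset_univ _)).trans_eq (by rw [Measure.restrict_apply_univ])
            _ = μ (ball (0:E) 1) * volume (Ioc (0:ℝ) 1) := by
              rw [setLIntegral_const]
            _ < ⊤ := by
              refine ENNReal.mul_lt_top measure_ball_lt_top ?_
              simp [Real.volume_Ioc]
        · have hmono : ∀ t ∈ Ioi (1:ℝ),
              (μ.restrict (ball (0:E) 1)) {a : E | t ≤ ‖a‖ ^ (-s)} ≤
                ENNReal.ofReal (t ^ (-(s⁻¹ * finrank ℝ E))) * μ (ball (0:E) 1) := by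
            intro t ht
            have ht0 : 0 < t := lt_trans one_pos ht
            calc
              (μ.restrict (ball (0:E) 1)) {a : E | t ≤ ‖a‖ ^ (-s)}
                  ≤ μ {a : E | t ≤ ‖a‖ ^ (-s)} := Measure.restrict_apply_le _ _
              _ ≤ μ (closedBall (0 : E) (t ^ (-s⁻¹))) := measure_mono (hsub t ht0)
              _ = ENNReal.ofReal ((t ^ (-s⁻¹)) ^ finrank ℝ E) * μ (ball (0:E) 1) :=
                μ.addHaar_closedBall _ (Real.rpow_nonneg ht0.le _)
              _ = ENNReal.ofReal (t ^ (-(s⁻¹ * finrank ℝ E))) * μ (ball (0:E) 1) := by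
                rw [← Real.rpow_natCast (t ^ (-s⁻¹)) (finrank ℝ E),
                  ← Real.rpow_mul ht0.le]
                ring_nf
          calc
            ∫⁻ t in Ioi (1:ℝ), (μ.restrict (ball (0:E) 1)) {a : E | t ≤ ‖a‖ ^ (-s)}
                ≤ ∫⁻ t in Ioi (1:ℝ),
                  ENNReal.ofReal (t ^ (-(s⁻¹ * finrank ℝ E))) * μ (ball (0:E) 1) :=
              setLIntegral_mono' measurableSet_Ioi hmono
            _ = (∫⁻ t in Ioi (1:ℝ), ENNReal.ofReal (t ^ (-(s⁻¹ * finrank ℝ E)))) *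
                μ (ball (0:E) 1) := lintegral_mul_const' _ _ measure_ball_lt_top.ne
            _ < ⊤ := by
              refine ENNReal.mul_lt_top ?_ measure_ball_lt_top
              refine IntegrableOn.setLIntegral_lt_top ?_
              refine integrableOn_Ioi_rpow_of_lt ?_ one_pos
              rw [neg_lt_neg_iff, lt_inv_mul_iff₀ hs]
              simpa [mul_comm] using hsd

/-- The basic kernel bound `min ‖z‖ 1 * ‖z‖ ^ (-(d+α))` is integrable for `0 < α < 1`. -/
lemma integrable_min_norm_rpow {α : ℝ} (hα0 : 0 < α) (hα1 : α < 1)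
    (hdim : 0 < finrank ℝ E) :
    Integrable (fun z : E => min ‖z‖ 1 * ‖z‖ ^ (-((finrank ℝ E : ℝ) + α))) μ := by
  set s : ℝ := (finrank ℝ E : ℝ) + α with hs_def
  have hs0 : 0 < s := by positivity
  have hmeas : Measurable fun z : E => min ‖z‖ 1 * ‖z‖ ^ (-s) := by measurability
  have hnn : ∀ z : E, 0 ≤ min ‖z‖ 1 * ‖z‖ ^ (-s) := fun z =>
    mul_nonneg (le_min (norm_nonneg z) zero_le_one) (Real.rpow_nonneg (norm_nonneg z) _)
  have hn1 : (1 : ℝ) ≤ (finrank ℝ E : ℝ) := by exact_mod_cast hdim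
  have hψball : IntegrableOn (fun z : E => min ‖z‖ 1 * ‖z‖ ^ (-s)) (ball (0:E) 1) μ := by
    have hint := integrableOn_norm_rpow_neg_ball μ (s := s - 1)
      (by simp only [hs_def]; linarith) (by simp only [hs_def]; linarith)
    refine Integrable.mono' hint hmeas.aestronglyMeasurable.restrict (ae_of_all _ fun z => ?_)
    rw [Real.norm_eq_abs, abs_of_nonneg (hnn z)]
    rcases eq_or_ne z 0 with rfl | hz
    · simp only [norm_zero, min_eq_left zero_le_one, zero_mul]
      exact Real.rpow_nonneg le_rfl _
    · have hz0 : 0 < ‖z‖ := norm_pos_iff.2 hz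
      have hrw : ‖z‖ ^ (-(s-1)) = ‖z‖ * ‖z‖ ^ (-s) := by
        rw [show -(s-1) = 1 + -s by ring, Real.rpow_add hz0, Real.rpow_one]
      rw [hrw]
      exact mul_le_mul_of_nonneg_right (min_le_left _ _) (Real.rpow_nonneg hz0.le _)
  have hψcompl : IntegrableOn (fun z : E => min ‖z‖ 1 * ‖z‖ ^ (-s)) (ball (0:E) 1)ᶜ μ := by
    have hint : Integrable (fun z : E => (2:ℝ) ^ s * (1 + ‖z‖) ^ (-s)) μ :=
      (integrable_one_add_norm (by simp only [hs_def]; linarith)).const_mul _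
    refine Integrable.mono' hint.integrableOn hmeas.aestronglyMeasurable.restrict ?_
    rw [ae_restrict_iff' measurableSet_ball.compl]
    refine ae_of_all _ fun z hz => ?_
    have h1 : 1 ≤ ‖z‖ := by
      simpa [mem_ball, dist_zero_right, not_lt] using hz
    rw [Real.norm_eq_abs, abs_of_nonneg (hnn z)]
    calc min ‖z‖ 1 * ‖z‖ ^ (-s) ≤ 1 * ‖z‖ ^ (-s) :=
          mul_le_mul_of_nonneg_right (min_le_right _ _) (Real.rpow_nonneg (norm_nonneg z) _)
      _ = ‖z‖ ^ (-s) := one_mul _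
      _ ≤ ((1 + ‖z‖)/2) ^ (-s) :=
          Real.rpow_le_rpow_of_nonpos (by linarith) (by linarith) (neg_nonpos.2 hs0.le)
      _ = (2:ℝ) ^ s * (1 + ‖z‖) ^ (-s) := by
          rw [Real.div_rpow (by linarith) (by norm_num : (0:ℝ) ≤ 2),
            Real.rpow_neg (by norm_num : (0:ℝ) ≤ 2), div_eq_mul_inv, inv_inv, mul_comm]
  have := hψball.union hψcompl
  rwa [union_compl_self, integrableOn_univ] at this

end Kernel

set_option maxHeartbeats 1000000 in
theorem stmt7 (d : ℕ) (hd : 0 < d) (α p : ℝ) (hα : 0 < α ∧ α < 1) (hp : 1 < p)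
    (u : EuclideanSpace ℝ (Fin d) → ℝ) (hu : ContDiff ℝ (⊤ : ℕ∞) u)
    (husupp : HasCompactSupport u) :
    Integrable (fun x : EuclideanSpace ℝ (Fin d) =>
      (∫ y : EuclideanSpace ℝ (Fin d), (u y - u x) / ‖y - x‖ ^ ((d : ℝ) + α)) *
        sgnPow (p - 1) (u x)) ∧
    Integrable (fun z : EuclideanSpace ℝ (Fin d) × EuclideanSpace ℝ (Fin d) =>
      (u z.2 - u z.1) * (sgnPow (p - 1) (u z.2) - sgnPow (p - 1) (u z.1)) /
        ‖z.2 - z.1‖ ^ ((d : ℝ) + α)) ∧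
    ((∫ x : EuclideanSpace ℝ (Fin d),
        (∫ y : EuclideanSpace ℝ (Fin d), (u y - u x) / ‖y - x‖ ^ ((d : ℝ) + α)) *
          sgnPow (p - 1) (u x)) =
      -(1 / 2) * ∫ x : EuclideanSpace ℝ (Fin d), ∫ y : EuclideanSpace ℝ (Fin d),
        (u y - u x) * (sgnPow (p - 1) (u y) - sgnPow (p - 1) (u x)) /
          ‖y - x‖ ^ ((d : ℝ) + α)) ∧
    (∫ x : EuclideanSpace ℝ (Fin d),
        (∫ y : EuclideanSpace ℝ (Fin d), (u y - u x) / ‖y - x‖ ^ ((d : ℝ) + α)) *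
          sgnPow (p - 1) (u x)) ≤ 0 := by
  obtain ⟨hα0, hα1⟩ := hα
  have hp0 : 0 < p - 1 := by linarith
  set s : ℝ := (d : ℝ) + α with hs_def
  have hs0 : 0 < s := by positivity
  set G : (EuclideanSpace ℝ (Fin d)) → ℝ := fun x => sgnPow (p - 1) (u x) with hGdef
  -- kernel bound
  have hψ : Integrable (fun z : (EuclideanSpace ℝ (Fin d)) => min ‖z‖ 1 * ‖z‖ ^ (-s)) volume := by
    have hdim : finrank ℝ (EuclideanSpace ℝ (Fin d)) = d := finrank_euclideanSpace_fin
    have := integrable_min_norm_rpow (volume : Measure (EuclideanSpace ℝ (Fin d))) hα0 hα1 (by rw [hdim]; exact hd)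
    rwa [hdim] at this
  -- Lipschitz constant and sup bound
  obtain ⟨L, hL⟩ := ContDiff.lipschitzWith_of_hasCompactSupport husupp hu (by simp)
  obtain ⟨M, hM⟩ := husupp.exists_bound_of_continuous hu.continuous
  have hM0 : 0 ≤ M := le_trans (norm_nonneg _) (hM 0)
  set L' : ℝ := (L : ℝ) with hL'def
  have hL'0 : 0 ≤ L' := L.coe_nonneg
  have humeas : Measurable u := hu.continuous.measurable
  have hGm : Measurable G := by
    have h1 : Measurable fun z : ℝ => |z| ^ (p - 1 - 1) * z := by measurability
    exact (h1.comp humeas : Measurable fun x => |u x| ^ (p - 1 - 1) * u x)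
  have hGbd : ∀ x, |G x| ≤ M ^ (p - 1) := by
    intro x
    rw [hGdef, abs_sgnPow hp0]
    exact Real.rpow_le_rpow (abs_nonneg _) (by simpa [Real.norm_eq_abs] using hM x) hp0.le
  have hG0 : ∀ x, x ∉ tsupport u → G x = 0 := by
    intro x hx
    rw [hGdef]
    simp only [image_eq_zero_of_notMem_tsupport hx, sgnPow_zero]
  have hSm : MeasurableSet (tsupport u) := (isClosed_tsupport u).measurableSet
  have hSfin : volume (tsupport u) < ⊤ := husupp.measure_lt_top
  -- pointwise difference bound
  have hdiff : ∀ x y : (EuclideanSpace ℝ (Fin d)), |u y - u x| ≤ min (L' * ‖y - x‖) (2 * M) := by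
    intro x y
    refine le_min ?_ ?_
    · have := hL.dist_le_mul y x
      rwa [Real.dist_eq, dist_eq_norm] at this
    · have h1 : |u y| ≤ M := by simpa [Real.norm_eq_abs] using hM y
      have h2 : |u x| ≤ M := by simpa [Real.norm_eq_abs] using hM x
      calc |u y - u x| ≤ |u y| + |u x| := abs_sub _ _
        _ ≤ 2 * M := by linarith
  -- kernel domination
  have hker : ∀ z : (EuclideanSpace ℝ (Fin d)), min (L' * ‖z‖) (2 * M) / ‖z‖ ^ s ≤
      (L' + 2 * M) * (min ‖z‖ 1 * ‖z‖ ^ (-s)) := by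
    intro z
    have hmin : min (L' * ‖z‖) (2 * M) ≤ (L' + 2 * M) * min ‖z‖ 1 := by
      rcases le_total ‖z‖ 1 with h | h
      · rw [min_eq_left h]
        exact (min_le_left _ _).trans (by nlinarith [norm_nonneg z])
      · rw [min_eq_right h]
        exact (min_le_right _ _).trans (by nlinarith)
    calc min (L' * ‖z‖) (2 * M) / ‖z‖ ^ s
        = min (L' * ‖z‖) (2 * M) * (‖z‖ ^ s)⁻¹ := div_eq_mul_inv _ _
      _ ≤ ((L' + 2 * M) * min ‖z‖ 1) * (‖z‖ ^ s)⁻¹ :=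
          mul_le_mul_of_nonneg_right hmin
            (inv_nonneg.2 (Real.rpow_nonneg (norm_nonneg z) _))
      _ = (L' + 2 * M) * (min ‖z‖ 1 * ‖z‖ ^ (-s)) := by
          rw [Real.rpow_neg (norm_nonneg z)]; ring
  -- the basic function F
  set F : (EuclideanSpace ℝ (Fin d)) × (EuclideanSpace ℝ (Fin d)) → ℝ := fun z => (u z.2 - u z.1) / ‖z.2 - z.1‖ ^ s * G z.1 with hFdef
  have hFmeas : Measurable F := by
    refine Measurable.mul (Measurable.div ?_ ?_) (hGm.comp measurable_fst)
    · exact (humeas.comp measurable_snd).sub (humeas.comp measurable_fst)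
    · have hr : Measurable fun t : ℝ => t ^ s := by measurability
      exact hr.comp ((measurable_snd.sub measurable_fst).norm)
  -- pointwise bound for F
  have hFbd : ∀ x y : (EuclideanSpace ℝ (Fin d)), ‖F (x, y)‖ ≤
      M ^ (p - 1) * ((L' + 2 * M) * (min ‖y - x‖ 1 * ‖y - x‖ ^ (-s))) := by
    intro x y
    have h1 : ‖F (x, y)‖ = |u y - u x| / ‖y - x‖ ^ s * |G x| := by
      rw [hFdef]
      simp only [Real.norm_eq_abs, abs_mul, abs_div,
        abs_of_nonneg (Real.rpow_nonneg (norm_nonneg (y - x)) s)]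
    rw [h1]
    have h2 : |u y - u x| / ‖y - x‖ ^ s ≤ (L' + 2 * M) * (min ‖y - x‖ 1 * ‖y - x‖ ^ (-s)) := by
      refine le_trans ?_ (hker (y - x))
      rw [div_eq_mul_inv, div_eq_mul_inv]
      exact mul_le_mul_of_nonneg_right (hdiff x y)
        (inv_nonneg.2 (Real.rpow_nonneg (norm_nonneg _) _))
    have h3 : (0:ℝ) ≤ (L' + 2 * M) * (min ‖y - x‖ 1 * ‖y - x‖ ^ (-s)) :=
      mul_nonneg (by linarith) (mul_nonneg (le_min (norm_nonneg (y-x)) zero_le_one)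
        (Real.rpow_nonneg (norm_nonneg (y-x)) (-s)))
    calc |u y - u x| / ‖y - x‖ ^ s * |G x|
        ≤ ((L' + 2 * M) * (min ‖y - x‖ 1 * ‖y - x‖ ^ (-s))) * (M ^ (p-1)) :=
          mul_le_mul h2 (hGbd x) (abs_nonneg _) h3
      _ = M ^ (p - 1) * ((L' + 2 * M) * (min ‖y - x‖ 1 * ‖y - x‖ ^ (-s))) := by ring
  -- dominating integrable function per slice
  have hdom : ∀ x : (EuclideanSpace ℝ (Fin d)), Integrable
      (fun y : (EuclideanSpace ℝ (Fin d)) => M ^ (p - 1) * ((L' + 2 * M) * (min ‖y - x‖ 1 * ‖y - x‖ ^ (-s)))) volume := by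
    intro x
    have := ((hψ.const_mul (L' + 2 * M)).comp_sub_right x).const_mul (M ^ (p - 1))
    simpa using this
  have hslice : ∀ x : (EuclideanSpace ℝ (Fin d)), Integrable (fun y => F (x, y)) volume := by
    intro x
    refine Integrable.mono' (hdom x) ?_ (Filter.Eventually.of_forall (hFbd x))
    exact (hFmeas.comp (measurable_const.prodMk measurable_id)).aestronglyMeasurable
  -- the integral of the dominating function is constant in x
  have hdomval : ∀ x : (EuclideanSpace ℝ (Fin d)),
      (∫ y : (EuclideanSpace ℝ (Fin d)), M ^ (p - 1) * ((L' + 2 * M) * (min ‖y - x‖ 1 * ‖y - x‖ ^ (-s)))) =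
        M ^ (p - 1) * ((L' + 2 * M) * ∫ z : (EuclideanSpace ℝ (Fin d)), min ‖z‖ 1 * ‖z‖ ^ (-s)) := by
    intro x
    rw [integral_const_mul]
    congr 1
    rw [integral_const_mul]
    congr 1
    exact integral_sub_right_eq_self (fun z : (EuclideanSpace ℝ (Fin d)) => min ‖z‖ 1 * ‖z‖ ^ (-s)) x
  set C₀ : ℝ := M ^ (p - 1) * ((L' + 2 * M) * ∫ z : (EuclideanSpace ℝ (Fin d)), min ‖z‖ 1 * ‖z‖ ^ (-s)) with hC₀
  -- integrability of x ↦ ∫ ‖F (x,y)‖ dy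
  have hFnormint : Integrable (fun x : (EuclideanSpace ℝ (Fin d)) => ∫ y : (EuclideanSpace ℝ (Fin d)), ‖F (x, y)‖) volume := by
    have hind : Integrable ((tsupport u).indicator fun _ : (EuclideanSpace ℝ (Fin d)) => C₀) volume := by
      rw [integrable_indicator_iff hSm]
      exact integrableOn_const hSfin.ne
    refine Integrable.mono' hind
      (hFmeas.aestronglyMeasurable.norm.integral_prod_right')
      (Filter.Eventually.of_forall fun x => ?_)
    have hnn : 0 ≤ ∫ y : (EuclideanSpace ℝ (Fin d)), ‖F (x, y)‖ := integral_nonneg fun y => norm_nonneg _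
    rw [Real.norm_eq_abs, abs_of_nonneg hnn]
    by_cases hx : x ∈ tsupport u
    · rw [Set.indicator_of_mem hx]
      calc (∫ y : (EuclideanSpace ℝ (Fin d)), ‖F (x, y)‖)
          ≤ ∫ y : (EuclideanSpace ℝ (Fin d)), M ^ (p - 1) * ((L' + 2 * M) * (min ‖y - x‖ 1 * ‖y - x‖ ^ (-s))) :=
            integral_mono (hslice x).norm (hdom x) (hFbd x)
        _ = C₀ := hdomval x
    · rw [Set.indicator_of_notMem hx]
      have hz : ∀ y : (EuclideanSpace ℝ (Fin d)), F (x, y) = 0 := by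
        intro y
        rw [hFdef]
        simp only [hG0 x hx, mul_zero]
      simp [hz]
  -- F is integrable on the product
  have hF1 : Integrable F ((volume : Measure (EuclideanSpace ℝ (Fin d))).prod volume) :=
    (integrable_prod_iff hFmeas.aestronglyMeasurable).2
      ⟨Filter.Eventually.of_forall hslice, hFnormint⟩
  -- the swapped function
  have hF2 : Integrable (fun z : (EuclideanSpace ℝ (Fin d)) × (EuclideanSpace ℝ (Fin d)) => (u z.2 - u z.1) / ‖z.2 - z.1‖ ^ s * G z.2)
      ((volume : Measure (EuclideanSpace ℝ (Fin d))).prod volume) := by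
    refine (hF1.swap.neg).congr (Filter.Eventually.of_forall fun z => ?_)
    rw [hFdef]
    simp only [Pi.neg_apply, Function.comp_apply, Prod.fst_swap, Prod.snd_swap]
    rw [norm_sub_rev]
    ring
  -- integrability of the double integrand (claim 2)
  have hDint : Integrable (fun z : (EuclideanSpace ℝ (Fin d)) × (EuclideanSpace ℝ (Fin d)) =>
      (u z.2 - u z.1) * (G z.2 - G z.1) / ‖z.2 - z.1‖ ^ s)
      ((volume : Measure (EuclideanSpace ℝ (Fin d))).prod volume) := by
    refine (hF2.sub hF1).congr (Filter.Eventually.of_forall fun z => ?_)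
    rw [hFdef]
    simp only [Pi.sub_apply]
    ring
  -- pull out the constant in the inner integral (claim 1 form)
  have h1 : ∀ x : (EuclideanSpace ℝ (Fin d)), (∫ y : (EuclideanSpace ℝ (Fin d)), (u y - u x) / ‖y - x‖ ^ s) * G x = ∫ y : (EuclideanSpace ℝ (Fin d)), F (x, y) := by
    intro x
    rw [hFdef]
    exact (integral_mul_const _ _).symm
  have claim1 : Integrable (fun x : (EuclideanSpace ℝ (Fin d)) =>
      (∫ y : (EuclideanSpace ℝ (Fin d)), (u y - u x) / ‖y - x‖ ^ s) * G x) volume :=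
    hF1.integral_prod_left.congr (Filter.Eventually.of_forall fun x => (h1 x).symm)
  -- the value of the product integral
  have hIF : (∫ x : (EuclideanSpace ℝ (Fin d)), (∫ y : (EuclideanSpace ℝ (Fin d)), (u y - u x) / ‖y - x‖ ^ s) * G x) =
      ∫ z : (EuclideanSpace ℝ (Fin d)) × (EuclideanSpace ℝ (Fin d)), F z ∂((volume : Measure (EuclideanSpace ℝ (Fin d))).prod volume) := by
    rw [integral_congr_ae (Filter.Eventually.of_forall h1)]
    exact integral_integral hF1
  have hswapval : (∫ z : (EuclideanSpace ℝ (Fin d)) × (EuclideanSpace ℝ (Fin d)), (u z.2 - u z.1) / ‖z.2 - z.1‖ ^ s * G z.2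
        ∂((volume : Measure (EuclideanSpace ℝ (Fin d))).prod volume)) =
      -∫ z : (EuclideanSpace ℝ (Fin d)) × (EuclideanSpace ℝ (Fin d)), F z ∂((volume : Measure (EuclideanSpace ℝ (Fin d))).prod volume) := by
    have h2 : ∀ z : (EuclideanSpace ℝ (Fin d)) × (EuclideanSpace ℝ (Fin d)), (u z.2 - u z.1) / ‖z.2 - z.1‖ ^ s * G z.2 = -(F z.swap) := by
      intro z
      rw [hFdef]
      simp only [Prod.fst_swap, Prod.snd_swap]
      rw [norm_sub_rev]
      ring
    rw [integral_congr_ae (Filter.Eventually.of_forall h2), integral_neg, integral_prod_swap]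
  have hdouble : (∫ x : (EuclideanSpace ℝ (Fin d)), ∫ y : (EuclideanSpace ℝ (Fin d)), (u y - u x) * (G y - G x) / ‖y - x‖ ^ s) =
      -2 * ∫ z : (EuclideanSpace ℝ (Fin d)) × (EuclideanSpace ℝ (Fin d)), F z ∂((volume : Measure (EuclideanSpace ℝ (Fin d))).prod volume) := by
    have hfub := integral_integral
      (f := fun x y : (EuclideanSpace ℝ (Fin d)) => (u y - u x) * (G y - G x) / ‖y - x‖ ^ s) (by exact hDint)
    rw [hfub]
    have hsplit : (∫ z : (EuclideanSpace ℝ (Fin d)) × (EuclideanSpace ℝ (Fin d)), (u z.2 - u z.1) * (G z.2 - G z.1) / ‖z.2 - z.1‖ ^ s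
          ∂((volume : Measure (EuclideanSpace ℝ (Fin d))).prod volume)) =
        (∫ z : (EuclideanSpace ℝ (Fin d)) × (EuclideanSpace ℝ (Fin d)), (u z.2 - u z.1) / ‖z.2 - z.1‖ ^ s * G z.2
          ∂((volume : Measure (EuclideanSpace ℝ (Fin d))).prod volume)) -
        ∫ z : (EuclideanSpace ℝ (Fin d)) × (EuclideanSpace ℝ (Fin d)), F z ∂((volume : Measure (EuclideanSpace ℝ (Fin d))).prod volume) := by
      rw [← integral_sub hF2 hF1]
      refine integral_congr_ae (Filter.Eventually.of_forall fun z => ?_)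
      rw [hFdef]
      ring
    rw [hsplit, hswapval]
    ring
  -- nonnegativity of the double integrand
  have hnonneg : ∀ x y : (EuclideanSpace ℝ (Fin d)), 0 ≤ (u y - u x) * (G y - G x) / ‖y - x‖ ^ s := by
    intro x y
    refine div_nonneg ?_ (Real.rpow_nonneg (norm_nonneg _) _)
    rcases le_total (u x) (u y) with h | h
    · exact mul_nonneg (sub_nonneg.2 h) (sub_nonneg.2 (sgnPow_mono hp0 h))
    · have h1 := sub_nonpos.2 h
      have h2 := sub_nonpos.2 (sgnPow_mono hp0 h)
      nlinarith
  have hDD : 0 ≤ ∫ x : (EuclideanSpace ℝ (Fin d)), ∫ y : (EuclideanSpace ℝ (Fin d)), (u y - u x) * (G y - G x) / ‖y - x‖ ^ s :=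
    integral_nonneg fun x => integral_nonneg fun y => hnonneg x y
  have claim3 : (∫ x : (EuclideanSpace ℝ (Fin d)), (∫ y : (EuclideanSpace ℝ (Fin d)), (u y - u x) / ‖y - x‖ ^ s) * G x) =
      -(1 / 2) * ∫ x : (EuclideanSpace ℝ (Fin d)), ∫ y : (EuclideanSpace ℝ (Fin d)), (u y - u x) * (G y - G x) / ‖y - x‖ ^ s := by
    rw [hIF, hdouble]
    ring
  refine ⟨claim1, hDint, claim3, ?_⟩
  rw [claim3]
  nlinarith [hDD]
end
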